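/- Let n ≥ 1 and let f̃ : ℝ^{n×n} → ℝ be differentiable, positive, invariant under orthogonal conjugation (f̃(QZQᵀ) = f̃(Z) for all Q ∈ O(n), Z ∈ ℝ^{n×n}) and under transposition (f̃(Zᵀ) = f̃(Z) for all Z). Define G : SO(n) → ℝ^{n×n} by G(Z) = (1/f̃(Z))·skew((∇f̃(Z))ᵀZ). Then for all R_i, R_j, Z ∈ SO(n) and every n×n real matrix E: ⟨G(R_j·R_iᵀ·Zᵀ·R_i·R_jᵀ), R_j·E·R_jᵀ⟩ = −⟨G(Z), R_i·E·R_iᵀ⟩, where ⟨A,B⟩ = trace(AᵀB). -/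

import Mathlib

open Matrix

noncomputable section

attribute [local instance] Matrix.normedAddCommGroup Matrix.normedSpace

/-- The special orthogonal group `SO(n)`, as a set of `n × n` real matrices. -/
def SO (n : ℕ) : Set (Matrix (Fin n) (Fin n) ℝ) :=
  {A | A * Aᵀ = 1 ∧ A.det = 1}

/-- The orthogonal group `O(n)`, as a set of `n × n` real matrices. -/
def ON (n : ℕ) : Set (Matrix (Fin n) (Fin n) ℝ) :=
  {A | A * Aᵀ = 1}

/-- The skew-symmetric part `(A - Aᵀ)/2` of a square matrix. -/
def skewPart {n : ℕ} (A : Matrix (Fin n) (Fin n) ℝ) : Matrix (Fin n) (Fin n) ℝ :=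
  (2 : ℝ)⁻¹ • (A - Aᵀ)

/-- The Euclidean (Frobenius) gradient of `f : ℝ^{n×n} → ℝ`. -/
def grad {n : ℕ} (f : Matrix (Fin n) (Fin n) ℝ → ℝ) (Z : Matrix (Fin n) (Fin n) ℝ) :
    Matrix (Fin n) (Fin n) ℝ :=
  Matrix.of fun i j => fderiv ℝ f Z (Matrix.single i j 1)

/-- The score map `G(Z) = (1 / f(Z)) · skew((∇f(Z))ᵀ Z)`. -/
def scoreG {n : ℕ} (f : Matrix (Fin n) (Fin n) ℝ → ℝ) (Z : Matrix (Fin n) (Fin n) ℝ) :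
    Matrix (Fin n) (Fin n) ℝ :=
  (f Z)⁻¹ • skewPart ((grad f Z)ᵀ * Z)

/-- The Frobenius inner product `⟨A, B⟩ = trace(Aᵀ B)`. -/
def frobInner {n : ℕ} (A B : Matrix (Fin n) (Fin n) ℝ) : ℝ :=
  (Aᵀ * B).trace


/-! The invariances of `f` pass to its gradient, `∇f(QZQᵀ) = Q ∇f(Z) Qᵀ` and
`∇f(Zᵀ) = ∇f(Z)ᵀ`, since conjugation by an orthogonal matrix and transposition are linear
automorphisms of the matrix space. Hence `G(QZQᵀ) = Q G(Z) Qᵀ`. Conjugating by `Z`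
itself shows that `∇f(Z)` commutes with an orthogonal `Z`, so `∇f(Zᵀ)ᵀ Zᵀ = (∇f(Z)ᵀ Z)ᵀ`
and `G(Zᵀ) = -G(Z)`. With `Q = Rj Riᵀ` the left-hand side is
`⟨-Q G(Z) Qᵀ, Q (Ri E Riᵀ) Qᵀ⟩`, and conjugation by `Q` preserves the Frobenius product. -/

section Orthogonal

variable {n : ℕ} {P Q : Matrix (Fin n) (Fin n) ℝ}

theorem SO_subset_ON : SO n ⊆ ON n := fun _ hA => hA.1

theorem ON.transpose_mul_self (hQ : Q ∈ ON n) : Qᵀ * Q = 1 := mul_eq_one_comm.mp hQ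

theorem ON.transpose_mem (hQ : Q ∈ ON n) : Qᵀ ∈ ON n := by
  simpa [ON] using ON.transpose_mul_self hQ

theorem ON.conj_cancel (hQ : Q ∈ ON n) (X : Matrix (Fin n) (Fin n) ℝ) :
    Q * (Qᵀ * X * Q) * Qᵀ = X := by
  have hQQ : Q * Qᵀ = 1 := hQ
  simp only [← Matrix.mul_assoc, hQQ, Matrix.one_mul]
  rw [Matrix.mul_assoc, hQQ, Matrix.mul_one]

theorem ON.mul_mem (hP : P ∈ ON n) (hQ : Q ∈ ON n) : P * Q ∈ ON n := by
  change P * Q * (P * Q)ᵀ = 1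
  rw [transpose_mul, Matrix.mul_assoc, ← Matrix.mul_assoc Q, hQ, Matrix.one_mul, hP]

def ON.conjCLE (hQ : Q ∈ ON n) :
    Matrix (Fin n) (Fin n) ℝ ≃L[ℝ] Matrix (Fin n) (Fin n) ℝ :=
  (Unitary.conjStarAlgAut ℝ _ ⟨Q, (mem_orthogonalGroup_iff (Fin n) ℝ).mpr hQ⟩).toAlgEquiv
    |>.toLinearEquiv.toContinuousLinearEquiv

@[simp] theorem ON.conjCLE_apply (hQ : Q ∈ ON n) (X : Matrix (Fin n) (Fin n) ℝ) :
    ON.conjCLE hQ X = Q * X * Qᵀ := by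
  simp [ON.conjCLE, star_eq_conjTranspose]

end Orthogonal

def transposeCLE (n : ℕ) : Matrix (Fin n) (Fin n) ℝ ≃L[ℝ] Matrix (Fin n) (Fin n) ℝ :=
  (transposeLinearEquiv (Fin n) (Fin n) ℝ ℝ).toContinuousLinearEquiv

@[simp] theorem transposeCLE_apply {n : ℕ} (X : Matrix (Fin n) (Fin n) ℝ) :
    transposeCLE n X = Xᵀ := rfl

theorem fderiv_apply_map_of_comp_eq {𝕜 E F : Type*} [NontriviallyNormedField 𝕜]
    [NormedAddCommGroup E] [NormedSpace 𝕜 E] [NormedAddCommGroup F] [NormedSpace 𝕜 F]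
    {f : E → F} (L : E ≃L[𝕜] E) (hfL : f ∘ L = f) (x v : E) :
    fderiv 𝕜 f (L x) (L v) = fderiv 𝕜 f x v := by
  conv_rhs => rw [← hfL, L.comp_right_fderiv]
  rfl

section Frobenius

variable {n : ℕ} {Q : Matrix (Fin n) (Fin n) ℝ}

theorem frobInner_single_one (A : Matrix (Fin n) (Fin n) ℝ) (i j : Fin n) :
    frobInner A (single i j 1) = A i j := by
  simp [frobInner, trace_mul_single]

theorem ext_frobInner {A B : Matrix (Fin n) (Fin n) ℝ}
    (h : ∀ H, frobInner A H = frobInner B H) : A = B := by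
  ext i j
  simpa only [frobInner_single_one] using h (single i j 1)

theorem frobInner_neg_left (A B : Matrix (Fin n) (Fin n) ℝ) :
    frobInner (-A) B = -frobInner A B := by
  simp [frobInner]

theorem frobInner_conj_conj (hQ : Q ∈ ON n) (A B : Matrix (Fin n) (Fin n) ℝ) :
    frobInner (Q * A * Qᵀ) (Q * B * Qᵀ) = frobInner A B := by
  have hQQ : Qᵀ * Q = 1 := ON.transpose_mul_self hQ
  calc frobInner (Q * A * Qᵀ) (Q * B * Qᵀ) = (Q * (Aᵀ * B * Qᵀ)).trace := by
        simp only [frobInner, transpose_mul, transpose_transpose, Matrix.mul_assoc]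
        rw [← Matrix.mul_assoc Qᵀ Q, hQQ, Matrix.one_mul]
    _ = (Aᵀ * B * (Qᵀ * Q)).trace := by rw [trace_mul_comm, Matrix.mul_assoc]
    _ = frobInner A B := by rw [hQQ, Matrix.mul_one, frobInner]

theorem fderiv_apply_eq_frobInner_grad (f : Matrix (Fin n) (Fin n) ℝ → ℝ)
    (Z H : Matrix (Fin n) (Fin n) ℝ) : fderiv ℝ f Z H = frobInner (grad f Z) H := by
  conv_lhs => rw [matrix_eq_sum_single H]
  conv_rhs => rw [matrix_eq_sum_single H]
  simp only [map_sum, frobInner, Matrix.mul_sum, trace_sum]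
  refine Finset.sum_congr rfl fun i _ => Finset.sum_congr rfl fun j _ => ?_
  have hsingle : single i j (H i j) = H i j • single i j (1 : ℝ) := by
    rw [smul_single, smul_eq_mul, mul_one]
  rw [trace_mul_single, hsingle, map_smul]
  simp [grad, mul_comm]

end Frobenius

section Gradient

variable {n : ℕ} {f : Matrix (Fin n) (Fin n) ℝ → ℝ} {Q Z : Matrix (Fin n) (Fin n) ℝ}

theorem grad_conj (hQ : Q ∈ ON n) (hfQ : ∀ X, f (Q * X * Qᵀ) = f X)
    (Z : Matrix (Fin n) (Fin n) ℝ) :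
    grad f (Q * Z * Qᵀ) = Q * grad f Z * Qᵀ := by
  have hfL : f ∘ ON.conjCLE hQ = f := funext fun X => by simp [hfQ]
  refine ext_frobInner fun H => ?_
  have hH : Q * (Qᵀ * H * Q) * Qᵀ = H := ON.conj_cancel hQ H
  calc frobInner (grad f (Q * Z * Qᵀ)) H
      = fderiv ℝ f (ON.conjCLE hQ Z) (ON.conjCLE hQ (Qᵀ * H * Q)) := by
        rw [ON.conjCLE_apply, ON.conjCLE_apply, hH, fderiv_apply_eq_frobInner_grad]
    _ = fderiv ℝ f Z (Qᵀ * H * Q) := fderiv_apply_map_of_comp_eq _ hfL Z _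
    _ = frobInner (grad f Z) (Qᵀ * H * Q) := fderiv_apply_eq_frobInner_grad f Z _
    _ = frobInner (Q * grad f Z * Qᵀ) H := by rw [← frobInner_conj_conj hQ, hH]

theorem grad_transpose (htrans : ∀ X, f Xᵀ = f X) (Z : Matrix (Fin n) (Fin n) ℝ) :
    grad f Zᵀ = (grad f Z)ᵀ := by
  have hfL : f ∘ transposeCLE n = f := funext fun X => htrans X
  ext i j
  rw [transpose_apply, grad, grad, of_apply, of_apply, ← transpose_single]
  exact fderiv_apply_map_of_comp_eq (transposeCLE n) hfL Z (single j i 1)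

end Gradient

section Score

variable {n : ℕ} {f : Matrix (Fin n) (Fin n) ℝ → ℝ} {Q Z : Matrix (Fin n) (Fin n) ℝ}

theorem grad_commute_transpose (hZ : Z ∈ ON n) (hfZ : ∀ X, f (Z * X * Zᵀ) = f X) :
    Commute (grad f Z) Zᵀ := by
  have hfix : grad f Z = Z * grad f Z * Zᵀ := by
    simpa only [Matrix.mul_assoc, show Z * Zᵀ = 1 from hZ, Matrix.mul_one] using
      grad_conj hZ hfZ Z
  calc grad f Z * Zᵀ = Zᵀ * (Z * grad f Z * Zᵀ) := by
        rw [← Matrix.mul_assoc, ← Matrix.mul_assoc, ON.transpose_mul_self hZ, Matrix.one_mul]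
    _ = Zᵀ * grad f Z := by rw [← hfix]

theorem skewPart_transpose (A : Matrix (Fin n) (Fin n) ℝ) : skewPart Aᵀ = -skewPart A := by
  rw [skewPart, skewPart, transpose_transpose, ← smul_neg, neg_sub]

theorem skewPart_conj (Q A : Matrix (Fin n) (Fin n) ℝ) :
    skewPart (Q * A * Qᵀ) = Q * skewPart A * Qᵀ := by
  simp only [skewPart, transpose_mul, transpose_transpose, Matrix.mul_smul, Matrix.smul_mul,
    Matrix.mul_sub, Matrix.sub_mul, Matrix.mul_assoc]

theorem scoreG_conj (hQ : Q ∈ ON n) (hfQ : ∀ X, f (Q * X * Qᵀ) = f X)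
    (Z : Matrix (Fin n) (Fin n) ℝ) : scoreG f (Q * Z * Qᵀ) = Q * scoreG f Z * Qᵀ := by
  have hprod : (Q * grad f Z * Qᵀ)ᵀ * (Q * Z * Qᵀ) = Q * ((grad f Z)ᵀ * Z) * Qᵀ := by
    simp only [transpose_mul, transpose_transpose, Matrix.mul_assoc]
    rw [← Matrix.mul_assoc Qᵀ Q, ON.transpose_mul_self hQ, Matrix.one_mul]
  rw [scoreG, scoreG, grad_conj hQ hfQ, hprod, skewPart_conj, hfQ, Matrix.mul_smul,
    Matrix.smul_mul]

theorem scoreG_transpose (hZ : Z ∈ ON n) (hfZ : ∀ X, f (Z * X * Zᵀ) = f X)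
    (htrans : ∀ X, f Xᵀ = f X) : scoreG f Zᵀ = -scoreG f Z := by
  have hprod : (grad f Zᵀ)ᵀ * Zᵀ = ((grad f Z)ᵀ * Z)ᵀ := by
    rw [grad_transpose htrans, transpose_transpose, transpose_mul, transpose_transpose,
      (grad_commute_transpose hZ hfZ).eq]
  rw [scoreG, scoreG, hprod, skewPart_transpose, htrans, smul_neg]

end Score

theorem stmt10_general {n : ℕ} (f : Matrix (Fin n) (Fin n) ℝ → ℝ)
    (hspec : ∀ Q ∈ ON n, ∀ Z, f (Q * Z * Qᵀ) = f Z)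
    (htrans : ∀ Z, f Zᵀ = f Z) :
    ∀ Ri ∈ SO n, ∀ Rj ∈ SO n, ∀ Z ∈ SO n, ∀ E : Matrix (Fin n) (Fin n) ℝ,
      frobInner (scoreG f (Rj * Riᵀ * Zᵀ * Ri * Rjᵀ)) (Rj * E * Rjᵀ) =
        -frobInner (scoreG f Z) (Ri * E * Riᵀ) := by
  intro Ri hRi Rj hRj Z hZ E
  replace hRi := SO_subset_ON hRi
  replace hZ := SO_subset_ON hZ
  have hQ : Rj * Riᵀ ∈ ON n := ON.mul_mem (SO_subset_ON hRj) (ON.transpose_mem hRi)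
  have hW : Rj * Riᵀ * Zᵀ * Ri * Rjᵀ = (Rj * Riᵀ) * Zᵀ * (Rj * Riᵀ)ᵀ := by
    simp only [transpose_mul, transpose_transpose, Matrix.mul_assoc]
  have hE : Rj * E * Rjᵀ = (Rj * Riᵀ) * (Ri * E * Riᵀ) * (Rj * Riᵀ)ᵀ := by
    simp only [transpose_mul, transpose_transpose, Matrix.mul_assoc]
    rw [← Matrix.mul_assoc Riᵀ Ri, ON.transpose_mul_self hRi, Matrix.one_mul,
      ← Matrix.mul_assoc Riᵀ Ri, ON.transpose_mul_self hRi, Matrix.one_mul]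
  rw [hW, hE, scoreG_conj hQ (hspec _ hQ), scoreG_transpose hZ (hspec Z hZ) htrans,
    Matrix.mul_neg, Matrix.neg_mul, frobInner_neg_left, frobInner_conj_conj hQ]

theorem stmt10 {n : ℕ} (hn : 1 ≤ n) (f : Matrix (Fin n) (Fin n) ℝ → ℝ)
    (hf : Differentiable ℝ f) (hpos : ∀ Z, 0 < f Z)
    (hspec : ∀ Q ∈ ON n, ∀ Z, f (Q * Z * Qᵀ) = f Z)
    (htrans : ∀ Z, f Zᵀ = f Z) :
    ∀ Ri ∈ SO n, ∀ Rj ∈ SO n, ∀ Z ∈ SO n, ∀ E : Matrix (Fin n) (Fin n) ℝ,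
      frobInner (scoreG f (Rj * Riᵀ * Zᵀ * Ri * Rjᵀ)) (Rj * E * Rjᵀ) =
        -frobInner (scoreG f Z) (Ri * E * Riᵀ) :=
  stmt10_general f hspec htrans
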